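/- arXiv:0911.1296 — 4 statements merged into one kernel-verified Lean document; each statement's English description precedes it below -/
import Mathlib

section
/- Let G be a finitely generated group and let Γ' ⊆ Γ be two subgroups of G with [Γ : Γ'] = t < ∞. Then for every g ∈ G, (1/t)·[Γ : Γ ∩ Γ^g] ≤ [Γ' : Γ' ∩ Γ'^g] ≤ t·[Γ : Γ ∩ Γ^g]. Equivalently, for every n, Comm_{≤n}(Γ,G) ⊆ Comm_{≤tn}(Γ',G) and Comm_{≤n}(Γ',G) ⊆ Comm_{≤tn}(Γ,G). -/
section CommensurizerDefs

variable {G : Type*} [Group G]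

/-- The conjugate subgroup `A ^ g = g⁻¹ A g`. -/
def conjSubgroup (g : G) (A : Subgroup G) : Subgroup G :=
  A.map (MulAut.conj g⁻¹).toMonoidHom

/-- `χ_{A,G}(g) = [A : A ∩ A^g]` (with the convention that this is `0` if the index
is infinite). -/
noncomputable def commIndex (A : Subgroup G) (g : G) : ℕ :=
  (conjSubgroup g A).relIndex A

/-- `g` commensurates `A` if `A ∩ A^g` has finite index in both `A` and `A^g`. -/
def Commensurates (A : Subgroup G) (g : G) : Prop :=
  (conjSubgroup g A).relIndex A ≠ 0 ∧ A.relIndex (conjSubgroup g A) ≠ 0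

/-- `Comm_{≤ n}(A, G) = ⋃_{l ≤ n} Comm_l(A, G)`. -/
def commSetLE (A : Subgroup G) (n : ℕ) : Set G :=
  {g : G | Commensurates A g ∧ commIndex A g ≤ n}

end CommensurizerDefs

/-! Put `K = Γ^g` and `K' = Γ'^g`, so that `[K : K'] = [Γ : Γ'] = t`. Counting `[Γ : Γ' ∩ K']`
through `Γ ∩ K` and through `Γ'` gives `m · [Γ : Γ ∩ K] = [Γ' : Γ' ∩ K'] · t` with
`m = [Γ ∩ K : Γ' ∩ K']`, and `1 ≤ m ≤ [Γ : Γ'] · [K : K'] = t²`. -/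

namespace Subgroup

variable {G : Type*} [Group G] {H H' K K' : Subgroup G}

theorem relIndex_inf_inf_le_mul (hHf : H'.relIndex H ≠ 0) (hKf : K'.relIndex K ≠ 0) :
    (H' ⊓ K').relIndex (H ⊓ K) ≤ H'.relIndex H * K'.relIndex K :=
  relIndex_inf_le.trans <| Nat.mul_le_mul (relIndex_le_of_le_right inf_le_left hHf)
    (relIndex_le_of_le_right inf_le_right hKf)

theorem relIndex_inf_inf_ne_zero (hHf : H'.relIndex H ≠ 0) (hKf : K'.relIndex K ≠ 0) :
    (H' ⊓ K').relIndex (H ⊓ K) ≠ 0 :=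
  relIndex_inf_ne_zero (fun h => hHf (relIndex_eq_zero_of_le_right inf_le_left h))
    (fun h => hKf (relIndex_eq_zero_of_le_right inf_le_right h))

theorem relIndex_inf_inf_mul_relIndex (hH : H' ≤ H) (hK : K' ≤ K) :
    (H' ⊓ K').relIndex (H ⊓ K) * K.relIndex H = K'.relIndex H' * H'.relIndex H := by
  rw [← inf_relIndex_left H K, ← inf_relIndex_left H' K',
    relIndex_mul_relIndex _ _ _ (inf_le_inf hH hK) inf_le_left,
    relIndex_mul_relIndex _ _ _ inf_le_left hH]

theorem relIndex_le_relIndex_mul_relIndex (hH : H' ≤ H) (hK : K' ≤ K)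
    (hHf : H'.relIndex H ≠ 0) (hKf : K'.relIndex K ≠ 0) :
    K.relIndex H ≤ H'.relIndex H * K'.relIndex H' :=
  calc K.relIndex H ≤ (H' ⊓ K').relIndex (H ⊓ K) * K.relIndex H :=
        Nat.le_mul_of_pos_left _ (Nat.pos_of_ne_zero (relIndex_inf_inf_ne_zero hHf hKf))
    _ = H'.relIndex H * K'.relIndex H' := by
        rw [relIndex_inf_inf_mul_relIndex hH hK, Nat.mul_comm]

theorem relIndex_le_relIndex_mul_relIndex' (hH : H' ≤ H) (hK : K' ≤ K)
    (hHf : H'.relIndex H ≠ 0) (hKf : K'.relIndex K ≠ 0) :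
    K'.relIndex H' ≤ K'.relIndex K * K.relIndex H := by
  refine Nat.le_of_mul_le_mul_left ?_ (Nat.pos_of_ne_zero hHf)
  calc H'.relIndex H * K'.relIndex H'
      = (H' ⊓ K').relIndex (H ⊓ K) * K.relIndex H := by
        rw [relIndex_inf_inf_mul_relIndex hH hK, Nat.mul_comm]
    _ ≤ H'.relIndex H * K'.relIndex K * K.relIndex H :=
        Nat.mul_le_mul_right _ (relIndex_inf_inf_le_mul hHf hKf)
    _ = H'.relIndex H * (K'.relIndex K * K.relIndex H) := Nat.mul_assoc _ _ _

end Subgroup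

section Commensurator

variable {G : Type*} [Group G]

theorem conjSubgroup_mono {A B : Subgroup G} (h : A ≤ B) (g : G) :
    conjSubgroup g A ≤ conjSubgroup g B :=
  Subgroup.map_mono h

theorem relIndex_conjSubgroup (A B : Subgroup G) (g : G) :
    (conjSubgroup g A).relIndex (conjSubgroup g B) = A.relIndex B :=
  Subgroup.relIndex_map_map_of_injective _ _ (MulEquiv.injective _)

theorem conjSubgroup_conjSubgroup_inv (A : Subgroup G) (g : G) :
    conjSubgroup g (conjSubgroup g⁻¹ A) = A := by
  ext x
  simp [conjSubgroup, Subgroup.map_map, mul_assoc]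

theorem relIndex_conjSubgroup_self (A : Subgroup G) (g : G) :
    A.relIndex (conjSubgroup g A) = commIndex A g⁻¹ := by
  have h := relIndex_conjSubgroup (conjSubgroup g⁻¹ A) A g
  rwa [conjSubgroup_conjSubgroup_inv] at h

theorem commensurates_iff (A : Subgroup G) (g : G) :
    Commensurates A g ↔ commIndex A g ≠ 0 ∧ commIndex A g⁻¹ ≠ 0 := by
  rw [Commensurates, relIndex_conjSubgroup_self]
  rfl

theorem commIndex_le_relIndex_mul_commIndex_of_le {Γ Γ' : Subgroup G} (hle : Γ' ≤ Γ)
    (ht0 : Γ'.relIndex Γ ≠ 0) (g : G) :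
    commIndex Γ g ≤ Γ'.relIndex Γ * commIndex Γ' g :=
  Subgroup.relIndex_le_relIndex_mul_relIndex hle (conjSubgroup_mono hle g) ht0
    (by rwa [relIndex_conjSubgroup])

theorem commIndex_of_le_le_relIndex_mul_commIndex {Γ Γ' : Subgroup G} (hle : Γ' ≤ Γ)
    (ht0 : Γ'.relIndex Γ ≠ 0) (g : G) :
    commIndex Γ' g ≤ Γ'.relIndex Γ * commIndex Γ g := by
  have h := Subgroup.relIndex_le_relIndex_mul_relIndex' hle (conjSubgroup_mono hle g) ht0
    (by rwa [relIndex_conjSubgroup])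
  rwa [relIndex_conjSubgroup] at h

theorem commSetLE_subset_commSetLE {A B : Subgroup G} {s t : ℕ}
    (hAB : ∀ g, commIndex A g ≤ s * commIndex B g)
    (hBA : ∀ g, commIndex B g ≤ t * commIndex A g) (n : ℕ) :
    commSetLE A n ⊆ commSetLE B (t * n) := by
  have hne : ∀ g, commIndex A g ≠ 0 → commIndex B g ≠ 0 := fun g hA hB =>
    hA (Nat.le_zero.mp (by simpa [hB] using hAB g))
  rintro g ⟨hcomm, hn⟩
  rw [commensurates_iff] at hcomm
  exact ⟨(commensurates_iff B g).2 ⟨hne g hcomm.1, hne g⁻¹ hcomm.2⟩,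
    (hBA g).trans (Nat.mul_le_mul_left t hn)⟩

end Commensurator

theorem commIndex_le_of_le_of_relindex_general {G : Type*} [Group G]
    (Γ Γ' : Subgroup G) (hle : Γ' ≤ Γ) (t : ℕ) (ht : Γ'.relIndex Γ = t) (ht0 : t ≠ 0) :
    (∀ g : G,
        commIndex Γ g ≤ t * commIndex Γ' g ∧ commIndex Γ' g ≤ t * commIndex Γ g) ∧
    (∀ n : ℕ,
        commSetLE Γ n ⊆ commSetLE Γ' (t * n) ∧ commSetLE Γ' n ⊆ commSetLE Γ (t * n)) := by
  subst ht
  have hΓ := commIndex_le_relIndex_mul_commIndex_of_le hle ht0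
  have hΓ' := commIndex_of_le_le_relIndex_mul_commIndex hle ht0
  exact ⟨fun g => ⟨hΓ g, hΓ' g⟩, fun n =>
    ⟨commSetLE_subset_commSetLE hΓ hΓ' n, commSetLE_subset_commSetLE hΓ' hΓ n⟩⟩

/-- **Proposition.** Let `G` be a finitely generated group and `Γ' ⊆ Γ` subgroups of `G`
with `[Γ : Γ'] = t < ∞`. Then for every `g ∈ G`,
`(1/t)·[Γ : Γ ∩ Γ^g] ≤ [Γ' : Γ' ∩ Γ'^g] ≤ t·[Γ : Γ ∩ Γ^g]`; equivalently, for every `n`,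
`Comm_{≤n}(Γ,G) ⊆ Comm_{≤tn}(Γ',G)` and `Comm_{≤n}(Γ',G) ⊆ Comm_{≤tn}(Γ,G)`.
(Indices are encoded in `ℕ` with `0` standing for an infinite index; the two displayed
inequalities together express exactly the stated estimate, including the fact that the
two indices are finite simultaneously.) -/
theorem commIndex_le_of_le_of_relindex {G : Type*} [Group G] (hfg : Group.FG G)
    (Γ Γ' : Subgroup G) (hle : Γ' ≤ Γ) (t : ℕ) (ht : Γ'.relIndex Γ = t) (ht0 : t ≠ 0) :
    (∀ g : G,
        commIndex Γ g ≤ t * commIndex Γ' g ∧ commIndex Γ' g ≤ t * commIndex Γ g) ∧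
    (∀ n : ℕ,
        commSetLE Γ n ⊆ commSetLE Γ' (t * n) ∧ commSetLE Γ' n ⊆ commSetLE Γ (t * n)) :=
  commIndex_le_of_le_of_relindex_general Γ Γ' hle t ht ht0
end

section
/- Let A ⊆ G and B ⊆ H be pairs of groups and let n be a positive integer. Then Comm_n(A × B, G × H) = ⊔_{a | n} Comm_a(A,G) × Comm_{n/a}(B,H); that is, (g,h) ∈ Comm_n(A × B, G × H) if and only if there is a (unique) divisor a of n with g ∈ Comm_a(A,G) and h ∈ Comm_{n/a}(B,H). -/
section CommensurizerDefs

variable {G : Type*} [Group G]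

/-- `Comm_n(A, G)`. -/
def commSet (A : Subgroup G) (n : ℕ) : Set G :=
  {g : G | Commensurates A g ∧ commIndex A g = n}

end CommensurizerDefs

/-!
Conjugation and relative indices both split over direct products, so
`[A × B : (A × B) ∩ (A × B)^(g,h)] = [A : A ∩ A^g] · [B : B ∩ B^h]`, and `(g, h)` commensurates
`A × B` iff `g` and `h` commensurate `A` and `B`. The divisor is then forced to be
`[A : A ∩ A^g]`, which is nonzero because `g` commensurates `A`.
-/

section

variable {G H : Type*} [Group G] [Group H]

theorem Subgroup.relIndex_prod (H₁ K₁ : Subgroup G) (H₂ K₂ : Subgroup H) :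
    (H₁.prod H₂).relIndex (K₁.prod K₂) = H₁.relIndex K₁ * H₂.relIndex K₂ := by
  have hrange : (K₁.subtype.prodMap K₂.subtype).range = K₁.prod K₂ := by
    rw [MonoidHom.range_prodMap, Subgroup.range_subtype, Subgroup.range_subtype]
  rw [← hrange, ← Subgroup.index_comap, MonoidHom.prodMap_comap_prod, Subgroup.index_prod]
  rfl

theorem mem_conjSubgroup {A : Subgroup G} {g x : G} : x ∈ conjSubgroup g A ↔ g * x * g⁻¹ ∈ A := by
  rw [conjSubgroup, Subgroup.mem_map_equiv]
  simp

theorem conjSubgroup_prod (A : Subgroup G) (B : Subgroup H) (g : G) (h : H) :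
    conjSubgroup (g, h) (A.prod B) = (conjSubgroup g A).prod (conjSubgroup h B) := by
  ext ⟨x, y⟩
  simp only [mem_conjSubgroup, Subgroup.mem_prod, Prod.mk_mul_mk, Prod.inv_mk]

theorem commIndex_prod (A : Subgroup G) (B : Subgroup H) (g : G) (h : H) :
    commIndex (A.prod B) (g, h) = commIndex A g * commIndex B h := by
  rw [commIndex, conjSubgroup_prod, Subgroup.relIndex_prod, commIndex, commIndex]

theorem commensurates_prod {A : Subgroup G} {B : Subgroup H} {g : G} {h : H} :
    Commensurates (A.prod B) (g, h) ↔ Commensurates A g ∧ Commensurates B h := by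
  simp only [Commensurates, conjSubgroup_prod, Subgroup.relIndex_prod, mul_ne_zero_iff]
  tauto

theorem Commensurates.commIndex_pos {A : Subgroup G} {g : G} (hg : Commensurates A g) :
    0 < commIndex A g :=
  Nat.pos_of_ne_zero hg.1

end

theorem commSet_prod_general {G H : Type*} [Group G] [Group H]
    (A : Subgroup G) (B : Subgroup H) (n : ℕ) (g : G) (h : H) :
    (g, h) ∈ commSet (A.prod B) n ↔
      ∃! a : ℕ, a ∣ n ∧ g ∈ commSet A a ∧ h ∈ commSet B (n / a) := by
  simp only [commSet, Set.mem_ofPred_eq, commensurates_prod, commIndex_prod]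
  constructor
  · rintro ⟨⟨hg, hh⟩, rfl⟩
    refine ⟨commIndex A g, ⟨dvd_mul_right _ _, ⟨hg, rfl⟩, hh,
      (Nat.mul_div_cancel_left _ hg.commIndex_pos).symm⟩, ?_⟩
    rintro a ⟨-, ⟨-, rfl⟩, -⟩
    rfl
  · rintro ⟨a, ⟨ha, ⟨hg, rfl⟩, hh, hb⟩, -⟩
    exact ⟨⟨hg, hh⟩, hb ▸ Nat.mul_div_cancel' ha⟩

/-- **Lemma (commensurizers of products).** Let `A ⊆ G` and `B ⊆ H` be pairs of groups
and let `n` be a positive integer. Then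
`Comm_n(A × B, G × H) = ⊔_{a ∣ n} Comm_a(A, G) × Comm_{n/a}(B, H)`:
a pair `(g, h)` lies in `Comm_n(A × B, G × H)` if and only if there is a (unique)
divisor `a` of `n` with `g ∈ Comm_a(A, G)` and `h ∈ Comm_{n/a}(B, H)`. -/
theorem commSet_prod {G H : Type*} [Group G] [Group H]
    (A : Subgroup G) (B : Subgroup H) (n : ℕ) (hn : 0 < n) (g : G) (h : H) :
    (g, h) ∈ commSet (A.prod B) n ↔
      ∃! a : ℕ, a ∣ n ∧ g ∈ commSet A a ∧ h ∈ commSet B (n / a) :=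
  commSet_prod_general A B n g h
end

section
/- Let T be a uniform tree, G = Aut(T), Γ ⊂ G a torsion-free uniform lattice, Y = Γ\T the quotient graph, and π : T → Y the canonical projection. Then the map φ sending the coset Γg to the composite π∘g is a bijection between the coset space Γ\G and the collection of graph covering maps T → Y. -/
/-- A graph in the sense of Serre: a vertex set `V`, a set `E` of oriented edges with
initial-vertex map `init` and a fixed-point-free involution `bar` (orientation
reversal). This allows loops and multiple edges, as needed for quotient graphs. -/
structure SGraph : Type 1 where
  V : Type
  E : Type
  init : E → V
  bar : E → E
  bar_invol : ∀ e, bar (bar e) = e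
  bar_ne : ∀ e, bar e ≠ e

namespace SGraph

/-- The terminal vertex of an oriented edge. -/
def term (X : SGraph) (e : X.E) : X.V := X.init (X.bar e)

/-- The star of a vertex: the set of oriented edges starting at it. -/
def star (X : SGraph) (v : X.V) : Set X.E := {e : X.E | X.init e = v}

/-- A morphism of graphs. -/
@[ext] structure Hom (X Y : SGraph) where
  fV : X.V → Y.V
  fE : X.E → Y.E
  init_comm : ∀ e, Y.init (fE e) = fV (X.init e)
  bar_comm : ∀ e, Y.bar (fE e) = fE (X.bar e)

/-- The identity morphism. -/
def Hom.id (X : SGraph) : Hom X X :=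
  ⟨fun v => v, fun e => e, fun _ => rfl, fun _ => rfl⟩

/-- Composition of graph morphisms. -/
def Hom.comp {X Y Z : SGraph} (f : Hom Y Z) (g : Hom X Y) : Hom X Z :=
  ⟨f.fV ∘ g.fV, f.fE ∘ g.fE,
    fun e => by simp [Function.comp, f.init_comm, g.init_comm],
    fun e => by simp [Function.comp, f.bar_comm, g.bar_comm]⟩

theorem Hom.comp_assoc {W X Y Z : SGraph} (f : Hom Y Z) (g : Hom X Y) (h : Hom W X) :
    (f.comp g).comp h = f.comp (g.comp h) := rfl

theorem Hom.comp_id {X Y : SGraph} (f : Hom X Y) : f.comp (Hom.id X) = f := rfl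

theorem Hom.id_comp {X Y : SGraph} (f : Hom X Y) : (Hom.id Y).comp f = f := rfl

/-- A graph morphism is a covering map if it is a local bijection, i.e. restricts to a
bijection from the star of each vertex onto the star of its image. -/
def Hom.IsCovering {X Y : SGraph} (f : Hom X Y) : Prop :=
  ∀ v : X.V, Set.BijOn f.fE (X.star v) (Y.star (f.fV v))

/-- An automorphism of a graph. -/
@[ext] structure Aut (X : SGraph) where
  toHom : Hom X X
  invHom : Hom X X
  left_inv : toHom.comp invHom = Hom.id X
  right_inv : invHom.comp toHom = Hom.id X

namespace Aut

variable {X : SGraph}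

instance : Mul (Aut X) :=
  ⟨fun a b =>
    ⟨a.toHom.comp b.toHom, b.invHom.comp a.invHom, by
      rw [Hom.comp_assoc, ← Hom.comp_assoc b.toHom, b.left_inv, Hom.id_comp, a.left_inv], by
      rw [Hom.comp_assoc, ← Hom.comp_assoc a.invHom, a.right_inv, Hom.id_comp, b.right_inv]⟩⟩

instance : One (Aut X) := ⟨⟨Hom.id X, Hom.id X, rfl, rfl⟩⟩

instance : Inv (Aut X) := ⟨fun a => ⟨a.invHom, a.toHom, a.right_inv, a.left_inv⟩⟩

@[simp] theorem mul_toHom (a b : Aut X) : (a * b).toHom = a.toHom.comp b.toHom := rfl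
@[simp] theorem mul_invHom (a b : Aut X) : (a * b).invHom = b.invHom.comp a.invHom := rfl
@[simp] theorem one_toHom : (1 : Aut X).toHom = Hom.id X := rfl
@[simp] theorem one_invHom : (1 : Aut X).invHom = Hom.id X := rfl
@[simp] theorem inv_toHom (a : Aut X) : a⁻¹.toHom = a.invHom := rfl
@[simp] theorem inv_invHom (a : Aut X) : a⁻¹.invHom = a.toHom := rfl

instance : Group (Aut X) where
  mul_assoc a b c := rfl
  one_mul a := rfl
  mul_one a := rfl
  inv_mul_cancel a := by
    refine Aut.ext ?_ ?_
    · simpa using a.right_inv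
    · simpa using a.right_inv

/-- Automorphisms act on the vertices of a graph. -/
instance : MulAction (Aut X) X.V where
  smul a v := a.toHom.fV v
  one_smul v := rfl
  mul_smul a b v := rfl

/-- Automorphisms act on the edges of a graph. -/
instance : MulAction (Aut X) X.E where
  smul a e := a.toHom.fE e
  one_smul e := rfl
  mul_smul a b e := rfl

@[simp] theorem smul_V_def (a : Aut X) (v : X.V) : a • v = a.toHom.fV v := rfl
@[simp] theorem smul_E_def (a : Aut X) (e : X.E) : a • e = a.toHom.fE e := rfl

end Aut

/-- A graph is connected if any two vertices are joined by an edge path. -/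
def Connected (X : SGraph) : Prop :=
  ∀ u v : X.V,
    Relation.ReflTransGen (fun x y : X.V => ∃ e : X.E, X.init e = x ∧ X.term e = y) u v

/-- A graph is a tree if it is nonempty, connected, and has no reduced closed edge path
of positive length. -/
def IsTreeS (X : SGraph) : Prop :=
  Nonempty X.V ∧ Connected X ∧
    ∀ (n : ℕ) (c : Fin (n + 1) → X.E),
      (∀ i : Fin n, X.init (c i.succ) = X.term (c i.castSucc)) →
      (∀ i : Fin n, c i.succ ≠ X.bar (c i.castSucc)) →
      X.term (c (Fin.last n)) ≠ X.init (c 0)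

/-- A graph is locally finite if all its stars are finite, and finite if it has finitely
many vertices and edges. -/
def LocallyFiniteS (X : SGraph) : Prop := ∀ v : X.V, (X.star v).Finite

variable (X : SGraph) (Γ : Subgroup (Aut X))

/-- The quotient graph `Γ\X` of a graph `X` by a subgroup `Γ ≤ Aut(X)` acting without
inversions (`hni`): vertices are `Γ`-orbits of vertices, edges are `Γ`-orbits of
oriented edges. -/
def quotSG (hni : ∀ (γ : ↥Γ) (e : X.E), (γ : Aut X) • e ≠ X.bar e) : SGraph where
  V := Quotient (MulAction.orbitRel ↥Γ X.V)
  E := Quotient (MulAction.orbitRel ↥Γ X.E)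
  init := Quotient.lift (fun e => (⟦X.init e⟧ : Quotient (MulAction.orbitRel ↥Γ X.V)))
    (by
      rintro e e' ⟨γ, rfl⟩
      exact Quotient.sound ⟨γ, ((γ : Aut X).toHom.init_comm e').symm⟩)
  bar := Quotient.lift (fun e => (⟦X.bar e⟧ : Quotient (MulAction.orbitRel ↥Γ X.E)))
    (by
      rintro e e' ⟨γ, rfl⟩
      refine Quotient.sound ⟨γ, ?_⟩
      exact ((γ : Aut X).toHom.bar_comm e').symm)
  bar_invol := by
    rintro ⟨e⟩
    exact congrArg (Quotient.mk _) (X.bar_invol e)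
  bar_ne := by
    rintro ⟨e⟩ h
    obtain ⟨γ, hγ⟩ := Quotient.exact h
    exact hni γ e hγ

/-- The canonical projection `X → Γ\X`. -/
def quotHom (hni : ∀ (γ : ↥Γ) (e : X.E), (γ : Aut X) • e ≠ X.bar e) :
    Hom X (quotSG X Γ hni) :=
  ⟨fun v => ⟦v⟧, fun e => ⟦e⟧, fun _ => rfl, fun _ => rfl⟩

end SGraph

open SGraph

/-! Since `Γ` acts freely and without inversions, the projection `π : T → Γ\T` is a covering,
hence so is `π ∘ g` for every `g ∈ Aut(T)`. Conversely, a covering `f : T → Γ\T` lifts through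
`π` to a map `g : T → T`: lifting the image of an edge path is well defined because backtracks
lift to backtracks and reduced paths in a tree are unique. This `g` is again a covering, and a
covering of a tree by a connected graph is an isomorphism, since a reduced path joining two
vertices with the same image would map to a reduced cycle. Finally, if `π ∘ g = π ∘ g'` then
some `γ ∈ Γ` makes `γ g` and `g'` agree at one vertex, and two lifts through a covering that
agree at one vertex agree everywhere. -/

namespace SGraph

variable {X X' Y : SGraph}

theorem term_bar (e : X.E) : X.term (X.bar e) = X.init e := by
  rw [term, X.bar_invol]

theorem Hom.term_comm (f : Hom X Y) (e : X.E) : Y.term (f.fE e) = f.fV (X.term e) := by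
  rw [term, term, f.bar_comm, f.init_comm]

theorem Hom.mapsTo_star (f : Hom X Y) (v : X.V) :
    Set.MapsTo f.fE (X.star v) (Y.star (f.fV v)) := fun e (he : X.init e = v) =>
  show Y.init (f.fE e) = f.fV v by rw [f.init_comm, he]

inductive EdgePath (X : SGraph) : X.V → List X.E → X.V → Prop
  | nil (v : X.V) : EdgePath X v [] v
  | cons {u v : X.V} (e : X.E) {l : List X.E} (he : X.init e = u)
      (h : EdgePath X (X.term e) l v) : EdgePath X u (e :: l) v

def Reduced (X : SGraph) (l : List X.E) : Prop := l.IsChain fun a b => b ≠ X.bar a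

def reversePath (X : SGraph) (l : List X.E) : List X.E := (l.map X.bar).reverse

namespace EdgePath

theorem eq_of_nil {u v : X.V} (h : EdgePath X u [] v) : u = v := by
  cases h; rfl

theorem cons_iff {u v : X.V} {e : X.E} {l : List X.E} :
    EdgePath X u (e :: l) v ↔ X.init e = u ∧ EdgePath X (X.term e) l v :=
  ⟨fun h => by cases h; exact ⟨‹_›, ‹_›⟩, fun h => cons e h.1 h.2⟩

theorem singleton (e : X.E) : EdgePath X (X.init e) [e] (X.term e) :=
  cons e rfl (nil _)

theorem append_iff {u w : X.V} {l₁ l₂ : List X.E} :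
    EdgePath X u (l₁ ++ l₂) w ↔ ∃ v, EdgePath X u l₁ v ∧ EdgePath X v l₂ w := by
  induction l₁ generalizing u with
  | nil => exact ⟨fun h => ⟨u, nil u, h⟩, fun ⟨v, h₁, h₂⟩ => h₁.eq_of_nil ▸ h₂⟩
  | cons e l₁ ih =>
    simp only [List.cons_append, cons_iff, ih]
    exact ⟨fun ⟨he, v, h₁, h₂⟩ => ⟨v, ⟨he, h₁⟩, h₂⟩, fun ⟨v, ⟨he, h₁⟩, h₂⟩ => ⟨he, v, h₁, h₂⟩⟩

theorem append {u v w : X.V} {l₁ l₂ : List X.E} (h₁ : EdgePath X u l₁ v)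
    (h₂ : EdgePath X v l₂ w) : EdgePath X u (l₁ ++ l₂) w :=
  append_iff.2 ⟨v, h₁, h₂⟩

theorem map (f : Hom X Y) {u v : X.V} {l : List X.E} (h : EdgePath X u l v) :
    EdgePath Y (f.fV u) (l.map f.fE) (f.fV v) := by
  induction h with
  | nil => exact nil _
  | cons e he _ ih => exact cons _ (by rw [f.init_comm, he]) (f.term_comm e ▸ ih)

theorem reverse {u v : X.V} {l : List X.E} (h : EdgePath X u l v) :
    EdgePath X v (X.reversePath l) u := by
  induction h with
  | nil => exact nil _
  | cons e he _ ih =>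
    simp only [reversePath, List.map_cons, List.reverse_cons] at ih ⊢
    exact ih.append (cons _ rfl (by rw [term_bar, he]; exact nil _))

theorem cancel_backtrack {u v : X.V} {a b : List X.E} {e : X.E}
    (h : EdgePath X u (a ++ e :: X.bar e :: b) v) : EdgePath X u (a ++ b) v := by
  obtain ⟨w, ha, hw⟩ := append_iff.1 h
  obtain ⟨he, -, hb⟩ := cons_iff.1 hw |>.imp_right cons_iff.1
  rw [term_bar, he] at hb
  exact ha.append hb

theorem exists_of_connected (hX : X.Connected) (u v : X.V) : ∃ l, EdgePath X u l v := by
  induction hX u v with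
  | refl => exact ⟨[], nil u⟩
  | tail _ step ih =>
    obtain ⟨l, hl⟩ := ih
    obtain ⟨e, rfl, rfl⟩ := step
    exact ⟨l ++ [e], hl.append (singleton e)⟩

theorem init_getElem_succ {u v : X.V} {l : List X.E} (h : EdgePath X u l v) (i : ℕ)
    (hi : i + 1 < l.length) : X.init l[i + 1] = X.term l[i] := by
  induction h generalizing i with
  | nil => simp at hi
  | cons _ _ h ih =>
    cases i with
    | zero =>
      cases h with
      | nil => simp at hi
      | cons _ he' _ => exact he'
    | succ i => exact ih i (by simpa using hi)

theorem term_getLast {u v : X.V} {l : List X.E} (h : EdgePath X u l v) (hne : l ≠ []) :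
    X.term (l.getLast hne) = v := by
  induction h with
  | nil => exact absurd rfl hne
  | cons _ _ h ih =>
    cases h with
    | nil => rfl
    | cons => simpa using ih (List.cons_ne_nil _ _)

end EdgePath

theorem Reduced.reversePath {l : List X.E} (h : X.Reduced l) : X.Reduced (X.reversePath l) := by
  unfold Reduced SGraph.reversePath
  rw [List.isChain_reverse, List.isChain_map]
  exact h.imp fun a b hab hba => hab (by rw [hba, X.bar_invol])

-- `P` carries an invariant of the path along the reduction, such as the endpoint of its
-- lift through a covering.
theorem EdgePath.exists_reduced {P : List X.E → Prop} {u v : X.V}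
    (hP : ∀ a b e, EdgePath X u (a ++ e :: X.bar e :: b) v →
      P (a ++ e :: X.bar e :: b) → P (a ++ b))
    {l : List X.E} (h : EdgePath X u l v) (hl : P l) :
    ∃ r, EdgePath X u r v ∧ X.Reduced r ∧ P r := by
  induction hn : l.length using Nat.strong_induction_on generalizing l with
  | _ n ih =>
  by_cases hr : X.Reduced l
  · exact ⟨l, h, hr, hl⟩
  obtain ⟨x, y, a, b, rfl, rfl⟩ : ∃ x y a b, l = a ++ x :: y :: b ∧ y = X.bar x := by
    simpa [Reduced, List.isChain_iff_forall_rel_of_append_cons_cons] using hr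
  exact ih (a ++ b).length (by simp [← hn]) h.cancel_backtrack (hP a b x h hl) rfl

theorem IsTreeS.eq_nil_of_reduced_cycle (hX : X.IsTreeS) {v : X.V} {l : List X.E}
    (h : EdgePath X v l v) (hr : X.Reduced l) : l = [] := by
  obtain _ | ⟨e, t⟩ := l
  · rfl
  have hlast := h.term_getLast (List.cons_ne_nil e t)
  rw [List.getLast_eq_getElem] at hlast
  refine absurd ?_ (hX.2.2 t.length (fun i => (e :: t)[i.val])
    (fun i => h.init_getElem_succ i (by simp)) (fun i => List.isChain_iff_getElem.1 hr i (by simp)))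
  simpa [(EdgePath.cons_iff.1 h).1] using hlast

theorem IsTreeS.reduced_path_unique (hX : X.IsTreeS) {u v : X.V} {l l' : List X.E}
    (h : EdgePath X u l v) (h' : EdgePath X u l' v) (hr : X.Reduced l) (hr' : X.Reduced l') :
    l = l' := by
  induction l generalizing u l' with
  | nil => exact (hX.eq_nil_of_reduced_cycle (h.eq_of_nil ▸ h') hr').symm
  | cons e t ih =>
    obtain _ | ⟨e', t'⟩ := l'
    · exact absurd (hX.eq_nil_of_reduced_cycle (h'.eq_of_nil ▸ h) hr) (List.cons_ne_nil e t)
    obtain ⟨he, ht⟩ := EdgePath.cons_iff.1 h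
    obtain ⟨he', ht'⟩ := EdgePath.cons_iff.1 h'
    by_cases hee : e = e'
    · subst hee
      rw [ih ht ht' hr.tail hr'.tail]
    -- otherwise, going back along `e :: t` and out along `e' :: t'` is a reduced cycle
    have hcycle := h.reverse.append h'
    have hred : X.Reduced (X.reversePath (e :: t) ++ e' :: t') := by
      refine List.IsChain.append hr.reversePath hr' ?_
      simp [SGraph.reversePath, X.bar_invol, Ne.symm hee]
    simpa [SGraph.reversePath] using hX.eq_nil_of_reduced_cycle hcycle hred

theorem Hom.IsCovering.comp {p : Hom X' Y} {g : Hom X X'} (hp : p.IsCovering)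
    (hg : g.IsCovering) : (p.comp g).IsCovering :=
  fun v => (hp (g.fV v)).comp (hg v)

theorem Hom.IsCovering.of_comp {p : Hom X' Y} {g : Hom X X'} (hp : p.IsCovering)
    (hpg : (p.comp g).IsCovering) : g.IsCovering := by
  refine fun v => ⟨g.mapsTo_star v, fun e₁ h₁ e₂ h₂ h => (hpg v).injOn h₁ h₂ (congrArg p.fE h),
    fun e' he' => ?_⟩
  obtain ⟨e, he, hpe⟩ := (hpg v).surjOn (p.mapsTo_star _ he')
  exact ⟨e, he, (hp (g.fV v)).injOn (g.mapsTo_star v he) he' hpe⟩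

theorem Aut.toHom_injective : Function.Injective (Aut.toHom : Aut X → Hom X X) := by
  intro a b h
  refine Aut.ext h ?_
  calc a.invHom = a.invHom.comp (b.toHom.comp b.invHom) := by rw [b.left_inv, Hom.comp_id]
    _ = (a.invHom.comp a.toHom).comp b.invHom := by rw [h]; rfl
    _ = b.invHom := by rw [a.right_inv, Hom.id_comp]

theorem Aut.isCovering (a : Aut X) : a.toHom.IsCovering := by
  intro v
  have hv : a.invHom.fV (a.toHom.fV v) = v := congrFun (congrArg Hom.fV a.right_inv) v
  refine Set.InvOn.bijOn ⟨fun e _ => congrFun (congrArg Hom.fE a.right_inv) e,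
    fun e _ => congrFun (congrArg Hom.fE a.left_inv) e⟩ (a.toHom.mapsTo_star v) ?_
  simpa only [hv] using a.invHom.mapsTo_star (a.toHom.fV v)

noncomputable def Aut.ofBijective (g : Hom X X) (hV : Function.Bijective g.fV)
    (hE : Function.Bijective g.fE) : Aut X where
  toHom := g
  invHom :=
    { fV := (Equiv.ofBijective _ hV).symm
      fE := (Equiv.ofBijective _ hE).symm
      init_comm := fun e => hV.1 (by simp [← g.init_comm, Equiv.ofBijective_apply_symm_apply])
      bar_comm := fun e => hE.1 (by simp [← g.bar_comm, Equiv.ofBijective_apply_symm_apply]) }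
  left_inv := Hom.ext (funext (Equiv.ofBijective _ hV).apply_symm_apply)
    (funext (Equiv.ofBijective _ hE).apply_symm_apply)
  right_inv := Hom.ext (funext (Equiv.ofBijective _ hV).symm_apply_apply)
    (funext (Equiv.ofBijective _ hE).symm_apply_apply)

section Quotient

variable (X : SGraph) (Γ : Subgroup (Aut X)) (hni : ∀ (γ : ↥Γ) (e : X.E), (γ : Aut X) • e ≠ X.bar e)

theorem isCovering_quotHom (hfree : ∀ (γ : ↥Γ) (v : X.V), (γ : Aut X) • v = v → γ = 1) :
    (quotHom X Γ hni).IsCovering := by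
  intro v
  refine ⟨(quotHom X Γ hni).mapsTo_star v,
    fun e₁ (h₁ : X.init e₁ = v) e₂ (h₂ : X.init e₂ = v) h => ?_, fun ε hε => ?_⟩
  · obtain ⟨γ, rfl⟩ := Quotient.exact h
    -- `γ` moves `e₂` to `e₁`, hence fixes their common initial vertex
    obtain rfl : γ = 1 := hfree γ v (by
      rw [← h₂]; exact ((γ : Aut X).toHom.init_comm e₂).symm.trans (h₁.trans h₂.symm))
    exact one_smul _ e₂
  · induction ε using Quotient.inductionOn with | h e => ?_
    obtain ⟨γ, hγ⟩ := Quotient.exact hε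
    refine ⟨γ⁻¹ • e, ?_, Quotient.sound ⟨γ⁻¹, rfl⟩⟩
    show X.init (((γ⁻¹ : ↥Γ) : Aut X).toHom.fE e) = v
    rw [Hom.init_comm]
    show γ⁻¹ • X.init e = v
    rw [← hγ, inv_smul_smul]

theorem quotHom_comp_of_mem {γ : Aut X} (hγ : γ ∈ Γ) :
    (quotHom X Γ hni).comp γ.toHom = quotHom X Γ hni :=
  Hom.ext (funext fun _ => Quotient.sound ⟨⟨γ, hγ⟩, rfl⟩)
    (funext fun _ => Quotient.sound ⟨⟨γ, hγ⟩, rfl⟩)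

end Quotient

open Classical in
/-- The terminal vertex of the lift through `p` of the edge `ε` at `w`; it is `w` when there
is no such lift, so that lifting an edge path is just `List.foldl (liftStep p)`. -/
noncomputable def liftStep (p : Hom X' Y) (w : X'.V) (ε : Y.E) : X'.V :=
  if h : ∃ e ∈ X'.star w, p.fE e = ε then X'.term h.choose else w

namespace Hom.IsCovering

theorem liftStep_eq {p : Hom X' Y} (hp : p.IsCovering) {w : X'.V} {e : X'.E} (he : X'.init e = w) :
    liftStep p w (p.fE e) = X'.term e := by
  have h : ∃ e' ∈ X'.star w, p.fE e' = p.fE e := ⟨e, he, rfl⟩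
  rw [liftStep, dif_pos h, (hp w).injOn h.choose_spec.1 he h.choose_spec.2]

theorem fV_liftStep {p : Hom X' Y} (hp : p.IsCovering) {w : X'.V} {ε : Y.E}
    (hε : Y.init ε = p.fV w) :
    p.fV (liftStep p w ε) = Y.term ε := by
  obtain ⟨e, he, rfl⟩ := (hp w).surjOn hε
  rw [hp.liftStep_eq he, p.term_comm]

theorem liftStep_liftStep_bar {p : Hom X' Y} (hp : p.IsCovering) {w : X'.V} {ε : Y.E}
    (hε : Y.init ε = p.fV w) :
    liftStep p (liftStep p w ε) (Y.bar ε) = w := by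
  obtain ⟨e, he, rfl⟩ := (hp w).surjOn hε
  rw [hp.liftStep_eq he, p.bar_comm, hp.liftStep_eq (w := X'.term e) (e := X'.bar e) rfl,
    term_bar, he]

theorem fV_foldl_liftStep {p : Hom X' Y} (hp : p.IsCovering) {L : List Y.E} {w : X'.V} {y : Y.V}
    (h : EdgePath Y (p.fV w) L y) : p.fV (L.foldl (liftStep p) w) = y := by
  induction L generalizing w with
  | nil => exact h.eq_of_nil
  | cons ε L ih =>
    obtain ⟨hε, hL⟩ := EdgePath.cons_iff.1 h
    exact ih (by rwa [hp.fV_liftStep hε])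

theorem foldl_liftStep_cancel_backtrack {p : Hom X' Y} (hp : p.IsCovering)
    {L₁ L₂ : List Y.E} {ε : Y.E} {w : X'.V} {y : Y.V}
    (h : EdgePath Y (p.fV w) (L₁ ++ ε :: Y.bar ε :: L₂) y) :
    (L₁ ++ ε :: Y.bar ε :: L₂).foldl (liftStep p) w = (L₁ ++ L₂).foldl (liftStep p) w := by
  obtain ⟨z, h₁, h₂⟩ := EdgePath.append_iff.1 h
  have hε : Y.init ε = p.fV (L₁.foldl (liftStep p) w) := by
    rw [hp.fV_foldl_liftStep h₁]; exact (EdgePath.cons_iff.1 h₂).1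
  simp only [List.foldl_append, List.foldl_cons, hp.liftStep_liftStep_bar hε]

end Hom.IsCovering

-- A backtrack lifts to a backtrack, so reducing a path does not move the endpoint of its lift.
theorem IsTreeS.foldl_liftStep_eq (hX : X.IsTreeS) {p : Hom X' Y} (hp : p.IsCovering)
    (f : Hom X Y) {v₀ v : X.V} {w₀ : X'.V} (hw₀ : p.fV w₀ = f.fV v₀) {l l' : List X.E}
    (h : EdgePath X v₀ l v) (h' : EdgePath X v₀ l' v) :
    (l.map f.fE).foldl (liftStep p) w₀ = (l'.map f.fE).foldl (liftStep p) w₀ := by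
  have reduce : ∀ {l}, EdgePath X v₀ l v → ∃ r, EdgePath X v₀ r v ∧ X.Reduced r ∧
      (r.map f.fE).foldl (liftStep p) w₀ = (l.map f.fE).foldl (liftStep p) w₀ := by
    refine fun h => h.exists_reduced (fun a b e hab hP => ?_) rfl
    have hmap := hw₀ ▸ hab.map f
    simp only [List.map_append, List.map_cons, ← f.bar_comm] at hmap hP ⊢
    rw [← hP, hp.foldl_liftStep_cancel_backtrack hmap]
  obtain ⟨r, hr, hred, hlift⟩ := reduce h
  obtain ⟨r', hr', hred', hlift'⟩ := reduce h'
  rw [← hlift, ← hlift', hX.reduced_path_unique hr hr' hred hred']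

theorem IsTreeS.exists_lift (hX : X.IsTreeS) {p : Hom X' Y} (hp : p.IsCovering) (f : Hom X Y)
    {v₀ : X.V} {w₀ : X'.V} (hw₀ : p.fV w₀ = f.fV v₀) :
    ∃ g : Hom X X', p.comp g = f ∧ g.fV v₀ = w₀ := by
  choose c hc using EdgePath.exists_of_connected hX.2.1 v₀
  set gV : X.V → X'.V := fun v => ((c v).map f.fE).foldl (liftStep p) w₀
  have hgV : ∀ {l v}, EdgePath X v₀ l v → (l.map f.fE).foldl (liftStep p) w₀ = gV v :=
    fun h => hX.foldl_liftStep_eq hp f hw₀ h (hc _)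
  have hproj : ∀ v, p.fV (gV v) = f.fV v := fun v =>
    hp.fV_foldl_liftStep (hw₀ ▸ (hc v).map f)
  choose gE hgE_init hgE_proj using fun e : X.E =>
    (hp (gV (X.init e))).surjOn (show Y.init (f.fE e) = _ by rw [hproj, f.init_comm])
  have hterm : ∀ e, X'.term (gE e) = gV (X.term e) := by
    intro e
    rw [← hgV ((hc (X.init e)).append (EdgePath.singleton e)), List.map_append,
      List.foldl_append, List.map_singleton, List.foldl_cons, List.foldl_nil, ← hgE_proj,
      hp.liftStep_eq (hgE_init e)]
  have hbar : ∀ e, X'.bar (gE e) = gE (X.bar e) := fun e =>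
    (hp (gV (X.term e))).injOn (show X'.term (gE e) = _ from hterm e) (hgE_init (X.bar e))
      (by rw [← p.bar_comm, hgE_proj, hgE_proj, f.bar_comm])
  exact ⟨⟨gV, gE, hgE_init, hbar⟩, Hom.ext (funext hproj) (funext hgE_proj),
    (hgV (EdgePath.nil v₀)).symm⟩

theorem Connected.hom_eq_of_comp_eq (hX : X.Connected) {p : Hom X' Y} (hp : p.IsCovering)
    {g₁ g₂ : Hom X X'} (h : p.comp g₁ = p.comp g₂) {v₀ : X.V} (h₀ : g₁.fV v₀ = g₂.fV v₀) :
    g₁ = g₂ := by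
  have hE : ∀ e, g₁.fV (X.init e) = g₂.fV (X.init e) → g₁.fE e = g₂.fE e := fun e he =>
    (hp _).injOn (g₁.init_comm e) ((g₂.init_comm e).trans he.symm)
      (congrFun (congrArg Hom.fE h) e)
  have hV : ∀ v, g₁.fV v = g₂.fV v := by
    intro v
    induction hX v₀ v with
    | refl => exact h₀
    | tail _ step ih =>
      obtain ⟨e, rfl, rfl⟩ := step
      rw [← g₁.term_comm, ← g₂.term_comm, hE e ih]
  exact Hom.ext (funext hV) (funext fun e => hE e (hV _))

theorem EdgePath.reduced_map {g : Hom X X'} (hg : g.IsCovering) {u v : X.V} {l : List X.E}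
    (h : EdgePath X u l v) (hr : X.Reduced l) : X'.Reduced (l.map g.fE) := by
  refine List.isChain_iff_getElem.2 fun i hi => ?_
  have hi' : i + 1 < l.length := by simpa using hi
  simp only [List.getElem_map, g.bar_comm]
  exact fun heq => List.isChain_iff_getElem.1 hr i hi'
    ((hg _).injOn (h.init_getElem_succ i hi') rfl heq)

namespace Hom.IsCovering

variable {g : Hom X X'}

theorem injective_fV (hX : X.Connected) (hX' : X'.IsTreeS) (hg : g.IsCovering) :
    Function.Injective g.fV := by
  intro u u' huu'
  obtain ⟨l, hl⟩ := EdgePath.exists_of_connected hX u u'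
  obtain ⟨r, hr, hred, -⟩ :=
    hl.exists_reduced (P := fun _ => True) (fun _ _ _ _ _ => trivial) trivial
  have hcycle : EdgePath X' (g.fV u) (r.map g.fE) (g.fV u) := huu' ▸ hr.map g
  obtain rfl := List.map_eq_nil_iff.1 (hX'.eq_nil_of_reduced_cycle hcycle (hr.reduced_map hg hred))
  exact hr.eq_of_nil

theorem surjective_fV (hX : Nonempty X.V) (hX' : X'.Connected) (hg : g.IsCovering) :
    Function.Surjective g.fV := by
  obtain ⟨v₀⟩ := hX
  intro w
  induction hX' (g.fV v₀) w with
  | refl => exact ⟨v₀, rfl⟩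
  | tail _ step ih =>
    obtain ⟨v, rfl⟩ := ih
    obtain ⟨e', he', rfl⟩ := step
    obtain ⟨e, -, rfl⟩ := (hg v).surjOn he'
    exact ⟨X.term e, (g.term_comm e).symm⟩

theorem bijective_fE (hg : g.IsCovering) (hV : Function.Bijective g.fV) :
    Function.Bijective g.fE := by
  refine ⟨fun e e' h => ?_, fun e' => ?_⟩
  · have hinit : X.init e = X.init e' := hV.1 (by rw [← g.init_comm, ← g.init_comm, h])
    exact (hg (X.init e)).injOn rfl hinit.symm h
  · obtain ⟨v, hv⟩ := hV.2 (X'.init e')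
    obtain ⟨e, -, he⟩ := (hg v).surjOn (show X'.init e' = g.fV v from hv.symm)
    exact ⟨e, he⟩

end Hom.IsCovering

theorem IsTreeS.exists_aut_eq_comp (hX : X.IsTreeS) {p f : Hom X Y} (hp : p.IsCovering)
    (hf : f.IsCovering) (hsurj : Function.Surjective p.fV) :
    ∃ a : Aut X, f = p.comp a.toHom := by
  obtain ⟨v₀⟩ := hX.1
  obtain ⟨w₀, hw₀⟩ := hsurj (f.fV v₀)
  obtain ⟨g, rfl, -⟩ := hX.exists_lift hp f hw₀
  have hg : g.IsCovering := hp.of_comp hf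
  have hV : Function.Bijective g.fV :=
    ⟨hg.injective_fV hX.2.1 hX, hg.surjective_fV hX.1 hX.2.1⟩
  exact ⟨Aut.ofBijective g hV (hg.bijective_fE hV), rfl⟩

end SGraph

theorem tree_cosets_equiv_coverings_general (X : SGraph) (htree : X.IsTreeS) (Γ : Subgroup (Aut X))
    (hfree : ∀ (γ : ↥Γ) (v : X.V), (γ : Aut X) • v = v → γ = 1)
    (hni : ∀ (γ : ↥Γ) (e : X.E), (γ : Aut X) • e ≠ X.bar e) :
    (∀ g : Aut X, ((quotHom X Γ hni).comp g.toHom).IsCovering) ∧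
    (∀ f : Hom X (quotSG X Γ hni), f.IsCovering →
        ∃ g : Aut X, f = (quotHom X Γ hni).comp g.toHom) ∧
    (∀ g g' : Aut X,
        (quotHom X Γ hni).comp g.toHom = (quotHom X Γ hni).comp g'.toHom ↔
          ∃ γ ∈ Γ, g' = γ * g) := by
  have hπ := isCovering_quotHom X Γ hni hfree
  refine ⟨fun g => hπ.comp g.isCovering,
    fun f hf => htree.exists_aut_eq_comp hπ hf Quotient.mk_surjective,
    fun g g' => ⟨fun h => ?_, ?_⟩⟩
  · obtain ⟨v₀⟩ := htree.1
    obtain ⟨γ, hγ⟩ := Quotient.exact (congrArg (fun k => k.fV v₀) h.symm)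
    refine ⟨γ, γ.2, Aut.toHom_injective (htree.2.1.hom_eq_of_comp_eq hπ ?_ hγ).symm⟩
    rw [Aut.mul_toHom, ← Hom.comp_assoc, quotHom_comp_of_mem X Γ hni γ.2, h]
  · rintro ⟨γ, hγ, rfl⟩
    rw [Aut.mul_toHom, ← Hom.comp_assoc, quotHom_comp_of_mem X Γ hni hγ]

/-- **Lemma.** Let `T` be a uniform tree (a locally finite tree covering a finite
graph — graphs are understood in the sense of Serre, so that quotient graphs make
sense), `G = Aut(T)`, and `Γ ⊆ G` a torsion-free uniform lattice: a subgroup acting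
freely on the vertices of `T`, without edge inversions (this is exactly freeness plus
torsion-freeness), and with finite quotient graph `Y = Γ\T`; `π : T → Y` denotes the
canonical projection. Then the map `φ : Γg ↦ π ∘ g` is a bijection between the coset
space `Γ\G` and the collection of graph covering maps `T → Y`; explicitly:
`π ∘ g` is a covering map for every `g ∈ G`, every covering map `T → Y` is of the form
`π ∘ g`, and `π ∘ g = π ∘ g'` if and only if `Γ g = Γ g'`. -/
theorem tree_cosets_equiv_coverings (X : SGraph) (htree : X.IsTreeS)
    (hlf : X.LocallyFiniteS) (Γ : Subgroup (Aut X))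
    (hfree : ∀ (γ : ↥Γ) (v : X.V), (γ : Aut X) • v = v → γ = 1)
    (hni : ∀ (γ : ↥Γ) (e : X.E), (γ : Aut X) • e ≠ X.bar e)
    (hquotV : Finite (Quotient (MulAction.orbitRel ↥Γ X.V)))
    (hquotE : Finite (Quotient (MulAction.orbitRel ↥Γ X.E))) :
    (∀ g : Aut X, ((quotHom X Γ hni).comp g.toHom).IsCovering) ∧
    (∀ f : Hom X (quotSG X Γ hni), f.IsCovering →
        ∃ g : Aut X, f = (quotHom X Γ hni).comp g.toHom) ∧
    (∀ g g' : Aut X,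
        (quotHom X Γ hni).comp g.toHom = (quotHom X Γ hni).comp g'.toHom ↔
          ∃ γ ∈ Γ, g' = γ * g) :=
  tree_cosets_equiv_coverings_general X htree Γ hfree hni
end

section
/- Let p be a prime, n ≥ 2, G = GL_n(𝔽_p) ⋉ 𝔽_p^n (the affine group, with GL_n(𝔽_p) acting on 𝔽_p^n), and let A ≅ 𝔽_p be the subgroup of translations by vectors of the form (t, 0, …, 0). Then: (1) the normalizer N_G(A) equals B ⋉ 𝔽_p^n, where B ≤ GL_n(𝔽_p) is the stabilizer of the line 𝔽_p·(1,0,…,0); (2) for every g ∈ G not in N_G(A), A ∩ A^g is trivial; consequently c_p(A, G) = (p^n − 1)/(p − 1) − 1 and c_m(A, G) = 0 for all m ∉ {1, p}. -/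
section CommensurizerDefs

variable {G : Type*} [Group G]

/-- The orbits of the left multiplication action of the normalizer `N_G(A)`
on `Comm_n(A, G)`. -/
def commOrbits (A : Subgroup G) (n : ℕ) : Set (Set G) :=
  {s : Set G | ∃ g ∈ commSet A n, s = (fun x => x * g) '' (Subgroup.normalizer (A : Set G) : Set G)}

/-- `c_n(A, G) = |N_G(A) \ Comm_n(A, G)|`. -/
noncomputable def cCount (A : Subgroup G) (n : ℕ) : ℕ :=
  Nat.card ↥(commOrbits A n)

end CommensurizerDefs

/-- The action of `GL_n(𝔽_p)` on the (multiplicative version of the) translation group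
`𝔽_p^n`, by matrix-vector multiplication. -/
def glMulAut (p n : ℕ) [Fact p.Prime] :
    GL (Fin n) (ZMod p) →* MulAut (Multiplicative (Fin n → ZMod p)) where
  toFun g :=
    { toFun := fun v => Multiplicative.ofAdd (g.val.mulVec v.toAdd)
      invFun := fun v => Multiplicative.ofAdd ((g⁻¹).val.mulVec v.toAdd)
      left_inv := fun v => by
        show Multiplicative.ofAdd ((g⁻¹).val.mulVec (g.val.mulVec v.toAdd)) = v
        rw [Matrix.mulVec_mulVec, ← Units.val_mul, inv_mul_cancel, Units.val_one,
          Matrix.one_mulVec]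
        rfl
      right_inv := fun v => by
        show Multiplicative.ofAdd (g.val.mulVec ((g⁻¹).val.mulVec v.toAdd)) = v
        rw [Matrix.mulVec_mulVec, ← Units.val_mul, mul_inv_cancel, Units.val_one,
          Matrix.one_mulVec]
        rfl
      map_mul' := fun v w => by
        show Multiplicative.ofAdd (g.val.mulVec (v.toAdd + w.toAdd)) = _
        rw [Matrix.mulVec_add, ofAdd_add] }
  map_one' := by
    refine MulEquiv.ext fun v => ?_
    show Multiplicative.ofAdd ((1 : GL (Fin n) (ZMod p)).val.mulVec v.toAdd) = v
    rw [Units.val_one, Matrix.one_mulVec]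
    rfl
  map_mul' g h := by
    refine MulEquiv.ext fun v => ?_
    show Multiplicative.ofAdd ((g * h).val.mulVec v.toAdd) =
      Multiplicative.ofAdd (g.val.mulVec (h.val.mulVec v.toAdd))
    rw [Matrix.mulVec_mulVec, Units.val_mul]

/-- The affine group `GL_n(𝔽_p) ⋉ 𝔽_p^n` (with the standard linear action). -/
abbrev AffGL (p n : ℕ) [Fact p.Prime] :=
  SemidirectProduct (Multiplicative (Fin n → ZMod p)) (GL (Fin n) (ZMod p)) (glMulAut p n)

/-- The subgroup `A ≅ 𝔽_p` of translations by vectors of the form `(t, 0, …, 0)`. -/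
def lineSubgroup (p n : ℕ) [Fact p.Prime] (hn : 0 < n) : Subgroup (AffGL p n) :=
  (SemidirectProduct.inl.comp
    ((AddMonoidHom.single (fun _ : Fin n => ZMod p) ⟨0, hn⟩).toMultiplicative)).range

/-!
Conjugating a translation by `g ∈ G` applies the linear part `M` of `g`, so `A^g` is the group of
translations along the line `M⁻¹ ℓ`, where `ℓ = 𝔽_p e₀`. Hence `g` normalizes `A` iff `M` fixes the
point `[e₀]` of `ℙ(𝔽_p^n)`, and otherwise `A ∩ A^g` lies in the intersection of two distinct lines,
which is trivial. So `[A : A ∩ A^g]` is `1` on `N = N_G(A)` and `p` off it, and the orbits counted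
by `c_p` are the right cosets of `N` other than `N` itself. There are `[G : N] - 1` of them, and
`[G : N]` is the length of the `GL_n(𝔽_p)`-orbit of `[e₀]`, i.e. `|ℙ(𝔽_p^n)| = (p^n - 1)/(p - 1)`.
-/

open MulAction Subgroup
open scoped LinearAlgebra.Projectivization

namespace Subgroup

variable {G : Type*} [Group G] {A : Subgroup G} {g : G} {m : ℕ}

/-- `A` is a TI (trivial intersection) subgroup: distinct conjugates of `A` meet trivially. -/
def IsTI (A : Subgroup G) : Prop :=
  ∀ g ∉ normalizer (A : Set G), A ⊓ conjSubgroup g A = ⊥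

theorem conjSubgroup_eq_self_of_mem_normalizer (hg : g ∈ normalizer (A : Set G)) :
    conjSubgroup g A = A :=
  mem_normalizer_iff_map_conj_eq.mp (inv_mem hg)

theorem commIndex_eq_one_of_mem_normalizer (hg : g ∈ normalizer (A : Set G)) :
    commIndex A g = 1 := by
  rw [commIndex, conjSubgroup_eq_self_of_mem_normalizer hg, relIndex_self]

theorem commIndex_eq_card_of_inf_eq_bot (h : A ⊓ conjSubgroup g A = ⊥) :
    commIndex A g = Nat.card A := by
  rw [commIndex, ← inf_relIndex_right, inf_comm, h, relIndex_bot_left]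

theorem commensurates_of_finite [Finite A] (g : G) : Commensurates A g :=
  have : Finite (conjSubgroup g A) :=
    .of_equiv _ (A.equivMapOfInjective _ (MulAut.conj g⁻¹).injective).toEquiv
  ⟨index_ne_zero_of_finite, index_ne_zero_of_finite⟩

theorem IsTI.commSet_card_eq_compl_normalizer [Finite A] (hA : A.IsTI) (hA1 : Nat.card A ≠ 1) :
    commSet A (Nat.card A) = (normalizer (A : Set G) : Set G)ᶜ := by
  ext g
  by_cases hg : g ∈ normalizer (A : Set G)
  · simp [commSet, hg, commIndex_eq_one_of_mem_normalizer hg, Ne.symm hA1]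
  · simp [commSet, hg, commensurates_of_finite, commIndex_eq_card_of_inf_eq_bot (hA g hg)]

theorem IsTI.commSet_eq_empty (hA : A.IsTI) (hm1 : m ≠ 1) (hmA : m ≠ Nat.card A) :
    commSet A m = ∅ := by
  refine Set.eq_empty_of_forall_notMem fun g ⟨_, hm⟩ => ?_
  by_cases hg : g ∈ normalizer (A : Set G)
  · exact hm1 (hm ▸ commIndex_eq_one_of_mem_normalizer hg)
  · exact hmA (hm ▸ commIndex_eq_card_of_inf_eq_bot (hA g hg))

theorem commOrbits_eq_image (A : Subgroup G) (m : ℕ) :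
    commOrbits A m =
      (fun g => (fun x => x * g) '' (normalizer (A : Set G) : Set G)) '' commSet A m := by
  ext s
  simp [commOrbits, eq_comm]

theorem card_image_compl_rightCoset (H : Subgroup G) :
    Nat.card ((fun g => (fun x => x * g) '' (H : Set G)) '' (H : Set G)ᶜ) = H.index - 1 := by
  set f := fun g : G => (fun x => x * g) '' (H : Set G)
  have hf : ∀ a b, f a = f b ↔ QuotientGroup.rightRel H a b := fun a b => by
    simp only [f, QuotientGroup.rightRel_apply, ← op_smul_eq_mul, Set.image_smul]
    exact rightCoset_eq_iff H
  have hrange : Nat.card (Set.range f) = H.index :=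
    Nat.card_congr ((Setoid.quotientKerEquivRange f).symm.trans
      ((Quotient.congrRight hf).trans (QuotientGroup.quotientRightRelEquivQuotientLeftRel H)))
  have hf1 : ∀ g, f g = f 1 ↔ g ∈ H := by simp [hf, QuotientGroup.rightRel_apply]
  have himage : f '' (H : Set G)ᶜ = Set.range f \ {f 1} := by
    ext s
    constructor
    · rintro ⟨g, hg, rfl⟩
      exact ⟨⟨g, rfl⟩, mt (hf1 g).mp hg⟩
    · rintro ⟨⟨g, rfl⟩, hg⟩
      exact ⟨g, mt (hf1 g).mpr hg, rfl⟩
  rw [himage, Nat.card_coe_set_eq, Set.ncard_sdiff_singleton_of_mem (Set.mem_range_self 1),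
    ← Nat.card_coe_set_eq, hrange]

theorem IsTI.cCount_card_eq_index_sub_one [Finite A] (hA : A.IsTI) (hA1 : Nat.card A ≠ 1) :
    cCount A (Nat.card A) = (normalizer (A : Set G)).index - 1 := by
  rw [cCount, commOrbits_eq_image, hA.commSet_card_eq_compl_normalizer hA1,
    card_image_compl_rightCoset]

theorem IsTI.cCount_eq_zero (hA : A.IsTI) (hm1 : m ≠ 1) (hmA : m ≠ Nat.card A) :
    cCount A m = 0 := by
  rw [cCount, commOrbits_eq_image, hA.commSet_eq_empty hm1 hmA, Set.image_empty]
  exact Nat.card_of_isEmpty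

end Subgroup

instance Matrix.GeneralLinearGroup.isPretransitive_projectivization
    {K ι : Type*} [Field K] [Fintype ι] [DecidableEq ι] :
    IsPretransitive (GL ι K) (ℙ K (ι → K)) := by
  have := isPretransitive_of_is_two_pretransitive (G := Matrix.SpecialLinearGroup ι K)
    (α := ℙ K (ι → K))
  refine ⟨fun x y => ?_⟩
  obtain ⟨s, hs⟩ := exists_smul_eq (Matrix.SpecialLinearGroup ι K) x y
  exact ⟨s, hs⟩

instance SemidirectProduct.finite {N G : Type*} [Group N] [Group G] {φ : G →* MulAut N}
    [Finite N] [Finite G] : Finite (N ⋊[φ] G) :=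
  .of_equiv _ SemidirectProduct.equivProd.symm

section AffineGroup

open SemidirectProduct Multiplicative

variable {p n : ℕ} [Fact p.Prime] {hn : 0 < n}

def e₀ (p : ℕ) (hn : 0 < n) : Fin n → ZMod p := Pi.single ⟨0, hn⟩ 1

theorem e₀_ne_zero : e₀ p hn ≠ 0 := Pi.single_ne_zero_iff.mpr one_ne_zero

theorem glMulAut_ofAdd (M : GL (Fin n) (ZMod p)) (v : Fin n → ZMod p) :
    glMulAut p n M (ofAdd v) = ofAdd (M • v) :=
  rfl

theorem mul_inl_mul_inv (g : AffGL p n) (v : Fin n → ZMod p) :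
    g * inl (ofAdd v) * g⁻¹ = inl (ofAdd (g.right • v)) := by
  ext
  · simp [mul_comm, glMulAut_ofAdd]
  · simp

theorem mem_lineSubgroup_iff {x : AffGL p n} :
    x ∈ lineSubgroup p n hn ↔ ∃ v ∈ ZMod p ∙ e₀ p hn, inl (ofAdd v) = x := by
  simp [lineSubgroup, Submodule.mem_span_singleton, e₀, ← Pi.single_smul']

theorem inl_mem_lineSubgroup_iff {v : Fin n → ZMod p} :
    inl (ofAdd v) ∈ lineSubgroup p n hn ↔ v ∈ ZMod p ∙ e₀ p hn := by
  simp [mem_lineSubgroup_iff, inl_injective.eq_iff]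

theorem card_lineSubgroup : Nat.card (lineSubgroup p n hn) = p := by
  rw [lineSubgroup, ← Nat.card_congr (MonoidHom.ofInjective _).toEquiv]
  · simp
  · intro a b h
    simpa using h

theorem mem_normalizer_lineSubgroup_iff {g : AffGL p n} :
    g ∈ normalizer (lineSubgroup p n hn : Set (AffGL p n)) ↔
      g.right • e₀ p hn ∈ ZMod p ∙ e₀ p hn := by
  constructor
  · intro hg
    have := (mem_normalizer_iff.mp hg _).mp
      (inl_mem_lineSubgroup_iff.mpr (Submodule.mem_span_singleton_self (e₀ p hn)))
    rwa [mul_inl_mul_inv, inl_mem_lineSubgroup_iff] at this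
  · intro h
    refine mem_normalizer_fintype fun x hx => ?_
    obtain ⟨v, hv, rfl⟩ := mem_lineSubgroup_iff.mp hx
    obtain ⟨a, rfl⟩ := Submodule.mem_span_singleton.mp hv
    rw [SetLike.mem_coe, mul_inl_mul_inv, inl_mem_lineSubgroup_iff, smul_comm]
    exact Submodule.smul_mem _ a h

theorem isTI_lineSubgroup : (lineSubgroup p n hn).IsTI := by
  intro g hg
  rw [eq_bot_iff]
  intro x hx
  obtain ⟨hx, a, ha, rfl⟩ := mem_inf.mp hx
  obtain ⟨v, hv, rfl⟩ := mem_lineSubgroup_iff.mp ha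
  obtain ⟨c, rfl⟩ := Submodule.mem_span_singleton.mp hv
  rw [MulEquiv.coe_toMonoidHom, MulAut.conj_apply, mul_inl_mul_inv] at hx ⊢
  rw [inl_mem_lineSubgroup_iff, smul_comm] at hx
  have hc : c = 0 := by
    by_contra hc
    apply hg
    rw [← inv_mem_iff, mem_normalizer_lineSubgroup_iff]
    simpa [hc] using Submodule.smul_mem _ c⁻¹ hx
  simp [hc]

theorem normalizer_lineSubgroup_eq_comap_stabilizer :
    normalizer (lineSubgroup p n hn : Set (AffGL p n)) =
      (stabilizer (GL (Fin n) (ZMod p)) (Projectivization.mk (ZMod p) (e₀ p hn) e₀_ne_zero)).comap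
        rightHom := by
  ext g
  rw [mem_normalizer_lineSubgroup_iff, mem_comap, mem_stabilizer_iff, rightHom_eq_right,
    Projectivization.smul_mk, Projectivization.mk_eq_mk_iff', Submodule.mem_span_singleton]

theorem index_normalizer_lineSubgroup :
    (normalizer (lineSubgroup p n hn : Set (AffGL p n))).index = (p ^ n - 1) / (p - 1) := by
  rw [normalizer_lineSubgroup_eq_comap_stabilizer, index_comap_of_surjective _ rightHom_surjective,
    index_stabilizer_of_transitive, Projectivization.card'']
  simp

end AffineGroup

theorem affine_group_commensurizer_general (p n : ℕ) [Fact p.Prime]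
    (hn : 0 < n) :
    (∀ x : AffGL p n,
        x ∈ Subgroup.normalizer (lineSubgroup p n hn : Set (AffGL p n)) ↔
          x.right.val.mulVec (Pi.single (⟨0, hn⟩ : Fin n) (1 : ZMod p)) ∈
            Submodule.span (ZMod p)
              {(Pi.single (⟨0, hn⟩ : Fin n) (1 : ZMod p) : Fin n → ZMod p)}) ∧
    (∀ g : AffGL p n, g ∉ Subgroup.normalizer (lineSubgroup p n hn : Set (AffGL p n)) →
        lineSubgroup p n hn ⊓ conjSubgroup g (lineSubgroup p n hn) = ⊥) ∧
    cCount (lineSubgroup p n hn) p = (p ^ n - 1) / (p - 1) - 1 ∧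
    (∀ m : ℕ, m ≠ 1 → m ≠ p → cCount (lineSubgroup p n hn) m = 0) := by
  have hcard_ne_one : Nat.card (lineSubgroup p n hn) ≠ 1 := by
    rw [card_lineSubgroup]
    exact (Fact.out : p.Prime).ne_one
  have hcount := isTI_lineSubgroup.cCount_card_eq_index_sub_one hcard_ne_one
  rw [card_lineSubgroup, index_normalizer_lineSubgroup] at hcount
  refine ⟨fun _ => mem_normalizer_lineSubgroup_iff, isTI_lineSubgroup, hcount, fun m hm1 hmp => ?_⟩
  exact isTI_lineSubgroup.cCount_eq_zero hm1 (by rwa [card_lineSubgroup])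

/-- **Lemma (affine groups over `𝔽_p`).** Let `p` be a prime, `n ≥ 2`,
`G = GL_n(𝔽_p) ⋉ 𝔽_p^n` the affine group, and `A ≅ 𝔽_p` the subgroup of translations by
vectors of the form `(t, 0, …, 0)`. Then:
(1) the normalizer `N_G(A)` equals `B ⋉ 𝔽_p^n`, where `B ≤ GL_n(𝔽_p)` is the stabilizer
of the line `𝔽_p·(1, 0, …, 0)` (i.e. an element of `G` normalizes `A` iff its linear part
maps `(1, 0, …, 0)` into that line);
(2) for every `g ∈ G` not in `N_G(A)`, the intersection `A ∩ A^g` is trivial;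
consequently `c_p(A, G) = (p^n - 1)/(p - 1) - 1` and `c_m(A, G) = 0` for all
`m ∉ {1, p}`. -/
theorem affine_group_commensurizer (p n : ℕ) [Fact p.Prime] (hn2 : 2 ≤ n)
    (hn : 0 < n) :
    (∀ x : AffGL p n,
        x ∈ Subgroup.normalizer (lineSubgroup p n hn : Set (AffGL p n)) ↔
          x.right.val.mulVec (Pi.single (⟨0, hn⟩ : Fin n) (1 : ZMod p)) ∈
            Submodule.span (ZMod p)
              {(Pi.single (⟨0, hn⟩ : Fin n) (1 : ZMod p) : Fin n → ZMod p)}) ∧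
    (∀ g : AffGL p n, g ∉ Subgroup.normalizer (lineSubgroup p n hn : Set (AffGL p n)) →
        lineSubgroup p n hn ⊓ conjSubgroup g (lineSubgroup p n hn) = ⊥) ∧
    cCount (lineSubgroup p n hn) p = (p ^ n - 1) / (p - 1) - 1 ∧
    (∀ m : ℕ, m ≠ 1 → m ≠ p → cCount (lineSubgroup p n hn) m = 0) :=
  affine_group_commensurizer_general p n hn
end
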